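/- Let M, N ⊆ [m] and D = aΔ_M + bΔ_N ⊆ I^m. Then C_D = {(v·d)_{d∈D} : v ∈ I^m} is a linear I-code of length 2^{|M|+|N|} and cardinality 2^{|M|}, and every nonzero codeword of C_D has Lee weight exactly 2^{|M|+|N|}; the number of v ∈ I^m with c_D(v) = 0 is 2^{2m−|M|}. -/

import Mathlib

open Finset

/-- The non-unital commutative ring `I` of order 4, with elements `0, a, b, c`. -/
inductive Ri : Type
  | zero | a | b | c
deriving DecidableEq

instance : Fintype Ri :=
  ⟨⟨[Ri.zero, Ri.a, Ri.b, Ri.c], by decide⟩, fun x => by cases x <;> decide⟩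

namespace Ri

/-- Addition table of `I` (the Klein four-group). -/
def add' : Ri → Ri → Ri
  | .zero, x => x
  | x, .zero => x
  | .a, .a => .zero
  | .a, .b => .c
  | .a, .c => .b
  | .b, .a => .c
  | .b, .b => .zero
  | .b, .c => .a
  | .c, .a => .b
  | .c, .b => .a
  | .c, .c => .zero

/-- Multiplication table of `I`: `a·a = b`, `a·c = c·a = b`, `c·c = b`, all else `0`. -/
def mul' : Ri → Ri → Ri
  | .a, .a => .b
  | .a, .c => .b
  | .c, .a => .b
  | .c, .c => .b
  | _, _ => .zero

instance : Zero Ri := ⟨Ri.zero⟩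
instance : Add Ri := ⟨add'⟩
instance : Mul Ri := ⟨mul'⟩
instance : Neg Ri := ⟨fun x => x⟩

instance : NonUnitalCommRing Ri where
  add_assoc := by decide
  zero_add := by decide
  add_zero := by decide
  add_comm := by decide
  neg_add_cancel := by decide
  left_distrib := by decide
  right_distrib := by decide
  zero_mul := by decide
  mul_zero := by decide
  mul_assoc := by decide
  mul_comm := by decide
  nsmul := nsmulRec
  zsmul := zsmulRec

/-- The action of `𝔽₂` on `I`: `0·x = 0` and `1·x = x`. -/
def smulF (s : ZMod 2) (x : Ri) : Ri := if s = 1 then x else 0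

/-- The element `a·s + b·t` of `I`, for `s, t ∈ 𝔽₂`. -/
def ofPair (s t : ZMod 2) : Ri := smulF s Ri.a + smulF t Ri.b

/-- The Gray map `Φ(a·s + b·t) = (t, s + t)`. -/
def gray : Ri → ZMod 2 × ZMod 2
  | .zero => (0, 0)
  | .a => (0, 1)
  | .b => (1, 1)
  | .c => (1, 0)

end Ri

/-- Hamming weight of a pair of bits. -/
def wt2 (p : ZMod 2 × ZMod 2) : ℕ :=
  (if p.1 = 1 then 1 else 0) + (if p.2 = 1 then 1 else 0)

/-- Lee weight of a vector over `I`, i.e. the Hamming weight of its Gray image. -/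
def leeWt {m : ℕ} (x : Fin m → Ri) : ℕ := ∑ i, wt2 (Ri.gray (x i))

/-- The vector `aα + bβ ∈ I^m`. -/
def vecI {m : ℕ} (α β : Fin m → ZMod 2) : Fin m → Ri := fun i => Ri.ofPair (α i) (β i)

/-- Support of a binary vector. -/
def suppF {m : ℕ} (v : Fin m → ZMod 2) : Finset (Fin m) :=
  Finset.univ.filter (fun i => v i = 1)

/-- The simplicial complex generated by `M`. -/
def deltaF {m : ℕ} (M : Finset (Fin m)) : Finset (Fin m → ZMod 2) :=
  Finset.univ.filter (fun w => suppF w ⊆ M)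

/-- The codeword of `C_D` associated to `v ∈ I^m`, where the defining set `D`
is given as a set of pairs `(t₁, t₂)` representing `a·t₁ + b·t₂ ∈ I^m`. -/
def cD {m : ℕ} (D : Finset ((Fin m → ZMod 2) × (Fin m → ZMod 2))) (v : Fin m → Ri) :
    {p // p ∈ D} → Ri := fun p => ∑ i, v i * vecI p.1.1 p.1.2 i

/-- Lee weight of a codeword indexed by the defining set `D`. -/
def leeWtC {m : ℕ} {D : Finset ((Fin m → ZMod 2) × (Fin m → ZMod 2))}
    (c : {p // p ∈ D} → Ri) : ℕ := ∑ p, wt2 (Ri.gray (c p))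


namespace CodeAux

/-- the "a-component" of an element of `I`. -/
def aC : Ri → ZMod 2
  | .a => 1
  | .c => 1
  | _ => 0

/-- `b`-valued additive hom from `𝔽₂` to `I`. -/
def bHom : ZMod 2 →+ Ri where
  toFun s := if s = 1 then Ri.b else 0
  map_zero' := by decide
  map_add' := by decide

lemma bHom_inj : ∀ s t : ZMod 2, bHom s = bHom t → s = t := by decide

lemma bHom_zero_iff : ∀ s : ZMod 2, bHom s = 0 ↔ s = 0 := by decide

lemma wt2_bHom : ∀ s : ZMod 2, wt2 (Ri.gray (bHom s)) = if s = 1 then 2 else 0 := by decide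

lemma zmod2 : ∀ s : ZMod 2, s = 0 ∨ s = 1 := by decide

lemma zmod2_add_self : ∀ s : ZMod 2, s + s = 0 := by decide

lemma mul_ofPair (x : Ri) (s t : ZMod 2) : x * Ri.ofPair s t = bHom (aC x * s) := by
  revert x s t; decide

lemma aC_smulF_a : ∀ s : ZMod 2, aC (Ri.smulF s Ri.a) = s := by decide

lemma mem_deltaF {m : ℕ} {M : Finset (Fin m)} {w : Fin m → ZMod 2} :
    w ∈ deltaF M ↔ ∀ i, w i = 1 → i ∈ M := by
  simp [deltaF, suppF, Finset.subset_iff]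

lemma cD_eq {m : ℕ} (D : Finset ((Fin m → ZMod 2) × (Fin m → ZMod 2))) (v : Fin m → Ri)
    (p : {p // p ∈ D}) : cD D v p = bHom (∑ i, aC (v i) * p.1.1 i) := by
  unfold cD
  rw [map_sum]
  exact Finset.sum_congr rfl fun i _ => mul_ofPair _ _ _

/-- indicator vector -/
def eV {m : ℕ} (i₀ : Fin m) : Fin m → ZMod 2 := fun j => if j = i₀ then 1 else 0

lemma eV_mem {m : ℕ} {M : Finset (Fin m)} {i₀ : Fin m} (h : i₀ ∈ M) : eV i₀ ∈ deltaF M := by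
  rw [mem_deltaF]
  intro i hi
  by_cases hii : i = i₀
  · rwa [hii]
  · simp [eV, hii] at hi

lemma dot_eV {m : ℕ} (α : Fin m → ZMod 2) (i₀ : Fin m) : (∑ i, α i * eV i₀ i) = α i₀ := by
  rw [Finset.sum_eq_single i₀]
  · simp [eV]
  · intro j _ hj; simp [eV, hj]
  · simp

lemma zero_mem_deltaF {m : ℕ} (M : Finset (Fin m)) : (0 : Fin m → ZMod 2) ∈ deltaF M := by
  rw [mem_deltaF]; intro i hi; simp at hi

lemma card_deltaF {m : ℕ} (M : Finset (Fin m)) : (deltaF M).card = 2 ^ M.card := by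
  rw [← Finset.card_powerset]
  apply Finset.card_bij (fun w _ => suppF w)
  · intro w hw
    rw [Finset.mem_powerset]
    exact (Finset.mem_filter.mp hw).2
  · intro w₁ h₁ w₂ h₂ h
    funext i
    have : (i ∈ suppF w₁) ↔ (i ∈ suppF w₂) := by rw [h]
    simp only [suppF, Finset.mem_filter, Finset.mem_univ, true_and] at this
    rcases zmod2 (w₁ i) with h1 | h1 <;> rcases zmod2 (w₂ i) with h2 | h2 <;>
      simp_all
  · intro S hS
    refine ⟨fun i => if i ∈ S then 1 else 0, ?_, ?_⟩
    · rw [mem_deltaF]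
      intro i hi
      by_cases hiS : i ∈ S
      · exact Finset.mem_powerset.mp hS hiS
      · simp [hiS] at hi
    · ext i
      simp only [suppF, Finset.mem_filter, Finset.mem_univ, true_and]
      by_cases hiS : i ∈ S <;> simp [hiS]

lemma cD_zero_iff {m : ℕ} (M N : Finset (Fin m)) (v : Fin m → Ri) :
    cD (deltaF M ×ˢ deltaF N) v = 0 ↔ ∀ i ∈ M, aC (v i) = 0 := by
  constructor
  · intro h i hi
    have hp : (eV i, (0 : Fin m → ZMod 2)) ∈ deltaF M ×ˢ deltaF N :=
      Finset.mem_product.mpr ⟨eV_mem hi, zero_mem_deltaF N⟩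
    have := congrFun h ⟨(eV i, 0), hp⟩
    rw [cD_eq] at this
    have h0 : bHom (∑ j, aC (v j) * eV i j) = 0 := this
    rw [dot_eV (fun j => aC (v j)) i] at h0
    exact (bHom_zero_iff _).mp h0
  · intro h
    funext p
    rw [cD_eq]
    have hp := (Finset.mem_product.mp p.2).1
    rw [mem_deltaF] at hp
    have : (∑ i, aC (v i) * p.1.1 i) = 0 := by
      apply Finset.sum_eq_zero
      intro i _
      rcases zmod2 (p.1.1 i) with h1 | h1
      · rw [h1, mul_zero]
      · rw [h i (hp i h1), zero_mul]
    rw [this]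
    exact bHom.map_zero

/-- the codeword attached to a binary vector α -/
def cw {m : ℕ} (D : Finset ((Fin m → ZMod 2) × (Fin m → ZMod 2))) (α : Fin m → ZMod 2) :
    {p // p ∈ D} → Ri := fun p => bHom (∑ i, α i * p.1.1 i)

lemma image_eq {m : ℕ} (M N : Finset (Fin m)) :
    Finset.univ.image (cD (deltaF M ×ˢ deltaF N)) =
      (deltaF M).image (cw (deltaF M ×ˢ deltaF N)) := by
  apply Finset.Subset.antisymm
  · intro c hc
    obtain ⟨v, _, hv⟩ := Finset.mem_image.mp hc
    refine Finset.mem_image.mpr ⟨fun i => if i ∈ M then aC (v i) else 0, ?_, ?_⟩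
    · rw [mem_deltaF]
      intro i hi
      by_cases hiM : i ∈ M
      · exact hiM
      · simp [hiM] at hi
    · rw [← hv]
      funext p
      rw [cD_eq]
      unfold cw
      congr 1
      apply Finset.sum_congr rfl
      intro i _
      by_cases hiM : i ∈ M
      · simp [hiM]
      · have hp := (Finset.mem_product.mp p.2).1
        rw [mem_deltaF] at hp
        rcases zmod2 (p.1.1 i) with h1 | h1
        · rw [h1, mul_zero, mul_zero]
        · exact absurd (hp i h1) hiM
  · intro c hc
    obtain ⟨α, _, hα⟩ := Finset.mem_image.mp hc
    refine Finset.mem_image.mpr ⟨fun i => Ri.smulF (α i) Ri.a, Finset.mem_univ _, ?_⟩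
    rw [← hα]
    funext p
    rw [cD_eq]
    unfold cw
    congr 1
    apply Finset.sum_congr rfl
    intro i _
    rw [aC_smulF_a]

lemma cw_injOn {m : ℕ} (M N : Finset (Fin m)) :
    Set.InjOn (cw (deltaF M ×ˢ deltaF N)) (deltaF M : Set (Fin m → ZMod 2)) := by
  intro α hα β hβ h
  rw [Finset.mem_coe, mem_deltaF] at hα hβ
  funext i
  by_cases hiM : i ∈ M
  · have hp : (eV i, (0 : Fin m → ZMod 2)) ∈ deltaF M ×ˢ deltaF N :=
      Finset.mem_product.mpr ⟨eV_mem hiM, zero_mem_deltaF N⟩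
    have := congrFun h ⟨(eV i, 0), hp⟩
    unfold cw at this
    rw [dot_eV α i, dot_eV β i] at this
    exact bHom_inj _ _ this
  · rcases zmod2 (α i) with h1 | h1 <;> rcases zmod2 (β i) with h2 | h2
    · rw [h1, h2]
    · exact absurd (hβ i h2) hiM
    · exact absurd (hα i h1) hiM
    · rw [h1, h2]

lemma add_eV_mem {m : ℕ} {M : Finset (Fin m)} {i₀ : Fin m} (hi₀ : i₀ ∈ M)
    {t : Fin m → ZMod 2} (ht : t ∈ deltaF M) : t + eV i₀ ∈ deltaF M := by
  rw [mem_deltaF] at ht ⊢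
  intro i hi
  by_cases hii : i = i₀
  · rwa [hii]
  · have : eV i₀ i = 0 := by simp [eV, hii]
    rw [Pi.add_apply, this, add_zero] at hi
    exact ht i hi

lemma dot_add_eV {m : ℕ} (α : Fin m → ZMod 2) (i₀ : Fin m) (t : Fin m → ZMod 2) :
    (∑ i, α i * (t + eV i₀) i) = (∑ i, α i * t i) + α i₀ := by
  have : ∀ i, α i * (t + eV i₀) i = α i * t i + α i * eV i₀ i := by
    intro i; rw [Pi.add_apply, mul_add]
  rw [Finset.sum_congr rfl fun i _ => this i, Finset.sum_add_distrib, dot_eV]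

lemma add_eV_add_eV {m : ℕ} (i₀ : Fin m) (t : Fin m → ZMod 2) : t + eV i₀ + eV i₀ = t := by
  funext j
  simp only [Pi.add_apply]
  rw [add_assoc, zmod2_add_self, add_zero]

lemma half_count {m : ℕ} (M : Finset (Fin m)) (α : Fin m → ZMod 2) (i₀ : Fin m)
    (hi₀ : i₀ ∈ M) (hα : α i₀ = 1) :
    ((deltaF M).filter (fun t => (∑ i, α i * t i) = 1)).card = 2 ^ (M.card - 1) := by
  have hsum : ((deltaF M).filter (fun t => (∑ i, α i * t i) = 1)).card +
      ((deltaF M).filter (fun t => ¬((∑ i, α i * t i) = 1))).card = 2 ^ M.card := by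
    rw [Finset.card_filter_add_card_filter_not, card_deltaF]
  have hbij : ((deltaF M).filter (fun t => ¬((∑ i, α i * t i) = 1))).card =
      ((deltaF M).filter (fun t => (∑ i, α i * t i) = 1)).card := by
    apply Finset.card_bij (fun t _ => t + eV i₀)
    · intro t ht
      obtain ⟨htM, htd⟩ := Finset.mem_filter.mp ht
      refine Finset.mem_filter.mpr ⟨add_eV_mem hi₀ htM, ?_⟩
      rcases zmod2 (∑ i, α i * t i) with h0 | h0
      · rw [dot_add_eV, h0, hα, zero_add]
      · exact absurd h0 htd
    · intro t₁ h₁ t₂ h₂ h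
      have := congrArg (fun x => x + eV i₀) h
      simpa only [add_eV_add_eV] using this
    · intro s hs
      obtain ⟨hsM, hsd⟩ := Finset.mem_filter.mp hs
      refine ⟨s + eV i₀, Finset.mem_filter.mpr ⟨add_eV_mem hi₀ hsM, ?_⟩, add_eV_add_eV i₀ s⟩
      rw [dot_add_eV, hsd, hα]
      decide
  have hMpos : 1 ≤ M.card := Finset.card_pos.mpr ⟨i₀, hi₀⟩
  have h2 : 2 ^ M.card = 2 * 2 ^ (M.card - 1) := by
    rcases Nat.exists_eq_add_of_le hMpos with ⟨k, hk⟩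
    rw [hk, Nat.add_sub_cancel_left, pow_add, pow_one]
  rw [hbij, h2, ← two_mul] at hsum
  exact Nat.eq_of_mul_eq_mul_left (by norm_num) hsum

lemma weight_eq {m : ℕ} (M N : Finset (Fin m)) (v : Fin m → Ri)
    (hv : cD (deltaF M ×ˢ deltaF N) v ≠ 0) :
    leeWtC (cD (deltaF M ×ˢ deltaF N) v) = 2 ^ (M.card + N.card) := by
  -- find i₀ ∈ M with aC (v i₀) = 1
  have hex : ∃ i₀ ∈ M, aC (v i₀) = 1 := by
    by_contra hcon
    push_neg at hcon
    apply hv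
    rw [cD_zero_iff]
    intro i hi
    rcases zmod2 (aC (v i)) with h0 | h0
    · exact h0
    · exact absurd h0 (hcon i hi)
  obtain ⟨i₀, hi₀, hαi₀⟩ := hex
  unfold leeWtC
  have hstep : ∀ p : {p // p ∈ deltaF M ×ˢ deltaF N},
      wt2 (Ri.gray (cD (deltaF M ×ˢ deltaF N) v p)) =
        if (∑ i, aC (v i) * p.1.1 i) = 1 then 2 else 0 := by
    intro p
    rw [cD_eq, wt2_bHom]
  rw [Finset.sum_congr rfl fun p _ => hstep p]
  rw [Finset.sum_coe_sort (deltaF M ×ˢ deltaF N)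
    (fun q => if (∑ i, aC (v i) * q.1 i) = 1 then 2 else 0)]
  rw [Finset.sum_product]
  have hconst : ∀ t₁ ∈ deltaF M,
      (∑ _t₂ ∈ deltaF N, (if (∑ i, aC (v i) * t₁ i) = 1 then 2 else 0)) =
        2 ^ N.card * (if (∑ i, aC (v i) * t₁ i) = 1 then 2 else 0) := by
    intro t₁ _
    rw [Finset.sum_const, card_deltaF, smul_eq_mul]
  rw [Finset.sum_congr rfl hconst, ← Finset.mul_sum]
  have : (∑ t₁ ∈ deltaF M, (if (∑ i, aC (v i) * t₁ i) = 1 then 2 else 0)) =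
      2 * ((deltaF M).filter (fun t => (∑ i, aC (v i) * t i) = 1)).card := by
    rw [← Finset.sum_filter, Finset.sum_const, smul_eq_mul, mul_comm]
  rw [this, half_count M (fun i => aC (v i)) i₀ hi₀ hαi₀]
  have hMpos : 1 ≤ M.card := Finset.card_pos.mpr ⟨i₀, hi₀⟩
  have h22 : 2 * 2 ^ (M.card - 1) = 2 ^ M.card := by
    rcases Nat.exists_eq_add_of_le hMpos with ⟨k, hk⟩
    rw [hk, Nat.add_sub_cancel_left, pow_add, pow_one]
  rw [h22, ← pow_add]
  ring_nf

lemma count_zero {m : ℕ} (M N : Finset (Fin m)) :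
    (Finset.univ.filter (fun v : Fin m → Ri => cD (deltaF M ×ˢ deltaF N) v = 0)).card =
      2 ^ (2 * m - M.card) := by
  have heq : (Finset.univ.filter (fun v : Fin m → Ri => cD (deltaF M ×ˢ deltaF N) v = 0)) =
      (Finset.univ.filter (fun v : Fin m → Ri => ∀ i, i ∈ M → aC (v i) = 0)) := by
    apply Finset.filter_congr
    intro v _
    rw [cD_zero_iff]
  rw [heq]
  have h1 : (Finset.univ.filter (fun v : Fin m → Ri => ∀ i, i ∈ M → aC (v i) = 0)).card =
      Fintype.card {v : Fin m → Ri // ∀ i, i ∈ M → aC (v i) = 0} := by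
    rw [Fintype.card_subtype]
  rw [h1]
  have h2 : Fintype.card {v : Fin m → Ri // ∀ i, i ∈ M → aC (v i) = 0} =
      Fintype.card (∀ i : Fin m, {x : Ri // i ∈ M → aC x = 0}) :=
    Fintype.card_congr (Equiv.subtypePiEquivPi (p := fun i x => i ∈ M → aC x = 0))
  rw [h2, Fintype.card_pi]
  have h3 : ∀ i : Fin m, Fintype.card {x : Ri // i ∈ M → aC x = 0} =
      if i ∈ M then 2 else 4 := by
    intro i
    by_cases hi : i ∈ M
    · simp only [hi, if_true]
      rw [Fintype.card_subtype]
      simp only [hi, true_implies]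
      decide
    · simp only [hi, if_false]
      rw [Fintype.card_subtype]
      simp only [hi, false_implies]
      decide
  rw [Finset.prod_congr rfl fun i _ => h3 i]
  rw [Finset.prod_ite, Finset.prod_const, Finset.prod_const]
  have hM : (Finset.univ.filter (fun i : Fin m => i ∈ M)) = M := by
    ext i; simp
  have hMc : (Finset.univ.filter (fun i : Fin m => ¬ i ∈ M)).card = m - M.card := by
    have hc : (Finset.univ.filter (fun i : Fin m => ¬ i ∈ M)) = Mᶜ := by
      ext i; simp
    rw [hc, Finset.card_compl, Fintype.card_fin]
  rw [hM, hMc]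
  have hle : M.card ≤ m := by
    have := Finset.card_le_univ M
    simpa using this
  have h4 : (4 : ℕ) = 2 ^ 2 := rfl
  have hexp : M.card + 2 * (m - M.card) = 2 * m - M.card := by clear * - hle; omega
  rw [h4, ← pow_mul, ← pow_add, hexp]

end CodeAux

theorem code_aDeltaM_bDeltaN (m : ℕ) (M N : Finset (Fin m)) :
    let D := deltaF M ×ˢ deltaF N
    D.card = 2 ^ (M.card + N.card) ∧
    (Finset.univ.image (cD D)).card = 2 ^ M.card ∧
    (∀ v : Fin m → Ri, cD D v ≠ 0 → leeWtC (cD D v) = 2 ^ (M.card + N.card)) ∧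
    (Finset.univ.filter (fun v : Fin m → Ri => cD D v = 0)).card = 2 ^ (2 * m - M.card) := by
  intro D
  refine ⟨?_, ?_, ?_, ?_⟩
  · rw [Finset.card_product, CodeAux.card_deltaF, CodeAux.card_deltaF, pow_add]
  · rw [CodeAux.image_eq M N,
      Finset.card_image_of_injOn (CodeAux.cw_injOn M N), CodeAux.card_deltaF]
  · exact fun v hv => CodeAux.weight_eq M N v hv
  · exact CodeAux.count_zero M N
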